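/- arXiv:2312.13195 — 2 statements merged into one kernel-verified Lean document; each statement's English description precedes it below -/
import Mathlib

section
/- Let P₁ and P₂ be independent real random variables, where P₁ has a hyperbolic density f₁ with parameters α, β, χ, μ (with α > |β|, χ > 0) and P₂ is normally distributed with mean 0 and variance σ² (σ > 0). Define Y₁ = (P₁+P₂)/√2 and Y₂ = (P₁−P₂)/√2. Then the limit as y → +∞ of ℙ(Y₁ ≥ y and Y₂ ≥ y) / ℙ(Y₂ ≥ y) exists and equals 2·Φ(−(α−β)·σ), where Φ is the standard normal cumulative distribution function (the coefficient of upper tail dependence of the copula of (Y₁,Y₂)). -/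
/-!
Write `λ = α - β`, `s = √2 y` and `G t = ℙ(P₁ ≥ t)`. The two events are `s + |P₂| ≤ P₁` and
`s + P₂ ≤ P₁`, so by independence their probabilities are `𝔼 G(s + |P₂|)` and `𝔼 G(s + P₂)`.
Since `e^{λx} f₁(x) = C e^{λμ} e^{α(x - μ - √(χ + (x - μ)²))}` increases to `C e^{λμ}`, the
normalised tail `e^{λt} G(t)` is bounded by, and tends to, `L = C e^{λμ} / λ > 0`. Dominated
convergence then gives `e^{λs} 𝔼 G(s + h(P₂)) → L 𝔼 e^{-λ h(P₂)}` for `h = |·|` and `h = id`, and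
the ratio of these Gaussian exponential moments is
`2 e^{λ²σ²/2} Φ(-λσ) / e^{λ²σ²/2} = 2 Φ(-λσ)`.
-/

open MeasureTheory ProbabilityTheory Filter Real

/-- The standard normal cumulative distribution function `Φ`. -/
noncomputable def stdNormalCDF (x : ℝ) : ℝ :=
  (ProbabilityTheory.gaussianReal 0 1 (Set.Iic x)).toReal

open Set Topology

lemma integral_Ioi_comp_add_right (f : ℝ → ℝ) (a c : ℝ) :
    ∫ x in Ioi c, f (x + a) = ∫ x in Ioi (c + a), f x := by
  have h := (measurePreserving_add_right volume a).setIntegral_preimage_emb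
    (Homeomorph.addRight a).isClosedEmbedding.measurableEmbedding f (Ioi (c + a))
  rwa [show (· + a) ⁻¹' Ioi (c + a) = Ioi c by ext; simp] at h

section ExponentialTail

lemma exp_mul_integral_Ioi_eq (f : ℝ → ℝ) (l t : ℝ) :
    exp (l * t) * ∫ x in Ioi t, f x
      = ∫ u in Ioi 0, exp (-l * u) * (exp (l * (u + t)) * f (u + t)) := by
  rw [← integral_const_mul, ← zero_add t, ← integral_Ioi_comp_add_right, zero_add]
  congr 1 with u
  rw [← mul_assoc, ← exp_add]
  ring_nf

lemma integrableOn_Ioi_exp_neg_mul_mul {l : ℝ} (hl : 0 < l) (K : ℝ) :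
    IntegrableOn (fun u ↦ exp (-l * u) * K) (Ioi 0) :=
  (integrableOn_exp_mul_Ioi (neg_neg_iff_pos.mpr hl) 0).mul_const K

lemma integral_Ioi_exp_neg_mul_mul {l : ℝ} (hl : 0 < l) (K : ℝ) :
    ∫ u in Ioi 0, exp (-l * u) * K = K / l := by
  rw [integral_mul_const, integral_exp_mul_Ioi (neg_neg_iff_pos.mpr hl)]
  field_simp
  simp

variable {f : ℝ → ℝ} {l K : ℝ}

lemma toReal_withDensity_Ici_eq_integral_Ioi (hf : Measurable f) (hf0 : ∀ x, 0 ≤ f x) (t : ℝ) :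
    ((volume.withDensity fun x ↦ ENNReal.ofReal (f x)) (Ici t)).toReal = ∫ x in Ioi t, f x := by
  rw [withDensity_apply _ measurableSet_Ici, ← integral_Ici_eq_integral_Ioi,
    integral_eq_lintegral_of_nonneg_ae (ae_of_all _ hf0) hf.aestronglyMeasurable]

lemma exp_mul_integral_Ioi_le (hl : 0 < l) (hf0 : ∀ x, 0 ≤ f x)
    (hK : ∀ x, exp (l * x) * f x ≤ K) (t : ℝ) : exp (l * t) * ∫ x in Ioi t, f x ≤ K / l := by
  rw [exp_mul_integral_Ioi_eq, ← integral_Ioi_exp_neg_mul_mul hl K]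
  refine integral_mono_of_nonneg (ae_of_all _ fun u ↦ by have := hf0 (u + t); positivity)
    (integrableOn_Ioi_exp_neg_mul_mul hl K) (ae_of_all _ fun u ↦ ?_)
  exact mul_le_mul_of_nonneg_left (hK _) (exp_pos _).le

lemma tendsto_exp_mul_integral_Ioi (hl : 0 < l) (hf : Measurable f) (hf0 : ∀ x, 0 ≤ f x)
    (hK : ∀ x, exp (l * x) * f x ≤ K) (hlim : Tendsto (fun x ↦ exp (l * x) * f x) atTop (𝓝 K)) :
    Tendsto (fun t ↦ exp (l * t) * ∫ x in Ioi t, f x) atTop (𝓝 (K / l)) := by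
  simp_rw [exp_mul_integral_Ioi_eq, ← integral_Ioi_exp_neg_mul_mul hl K]
  refine tendsto_integral_filter_of_dominated_convergence _
    (Eventually.of_forall fun t ↦ by fun_prop) (Eventually.of_forall fun t ↦ ?_)
    (integrableOn_Ioi_exp_neg_mul_mul hl K)
    (ae_of_all _ fun u ↦ (hlim.comp (tendsto_atTop_add_const_left _ u tendsto_id)).const_mul _)
  refine ae_of_all _ fun u ↦ ?_
  rw [norm_of_nonneg (by have := hf0 (u + t); positivity)]
  exact mul_le_mul_of_nonneg_left (hK _) (exp_pos _).le

end ExponentialTail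

section Hyperbolic

lemma sub_sqrt_add_sq_nonpos {χ : ℝ} (hχ : 0 ≤ χ) (v : ℝ) : v - √(χ + v ^ 2) ≤ 0 :=
  sub_nonpos.mpr <| (le_abs_self v).trans <| by
    rw [← sqrt_sq_eq_abs]; exact sqrt_le_sqrt (by linarith)

lemma tendsto_sub_sqrt_add_sq_atTop {χ : ℝ} (hχ : 0 ≤ χ) :
    Tendsto (fun v : ℝ ↦ v - √(χ + v ^ 2)) atTop (𝓝 0) := by
  have hden : Tendsto (fun v : ℝ ↦ √(χ + v ^ 2) + v) atTop atTop :=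
    Tendsto.nonneg_add_atTop (fun v ↦ sqrt_nonneg _) tendsto_id
  have h0 := ((tendsto_const_nhds (x := -χ)).div_atTop hden)
  refine h0.congr' ?_
  filter_upwards [eventually_gt_atTop 0] with v hv
  -- rationalize: `v - √(χ + v²) = -χ / (√(χ + v²) + v)`
  have hsq : √(χ + v ^ 2) ^ 2 = χ + v ^ 2 := sq_sqrt (by positivity)
  have hpos : 0 < √(χ + v ^ 2) + v := by positivity
  field_simp
  linear_combination hsq

variable {α β χ μ C : ℝ}

noncomputable def hyperbolicPDF (α β χ μ C x : ℝ) : ℝ :=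
  C * exp (-(α * √(χ + (x - μ) ^ 2)) + β * (x - μ))

lemma hyperbolicPDF_nonneg (hC : 0 ≤ C) (x : ℝ) : 0 ≤ hyperbolicPDF α β χ μ C x := by
  unfold hyperbolicPDF; positivity

@[fun_prop]
lemma continuous_hyperbolicPDF : Continuous (hyperbolicPDF α β χ μ C) := by
  unfold hyperbolicPDF; fun_prop

lemma exp_mul_hyperbolicPDF (x : ℝ) :
    exp ((α - β) * x) * hyperbolicPDF α β χ μ C x
      = C * exp ((α - β) * μ) * exp (α * ((x - μ) - √(χ + (x - μ) ^ 2))) := by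
  simp only [hyperbolicPDF, mul_assoc, mul_left_comm _ C, ← exp_add]
  ring_nf

lemma exp_mul_hyperbolicPDF_le (hα : 0 ≤ α) (hχ : 0 ≤ χ) (hC : 0 ≤ C) (x : ℝ) :
    exp ((α - β) * x) * hyperbolicPDF α β χ μ C x ≤ C * exp ((α - β) * μ) := by
  rw [exp_mul_hyperbolicPDF]
  refine mul_le_of_le_one_right (by positivity) (exp_le_one_iff.mpr ?_)
  exact mul_nonpos_of_nonneg_of_nonpos hα (sub_sqrt_add_sq_nonpos hχ _)

lemma tendsto_exp_mul_hyperbolicPDF (hχ : 0 ≤ χ) :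
    Tendsto (fun x ↦ exp ((α - β) * x) * hyperbolicPDF α β χ μ C x) atTop
      (𝓝 (C * exp ((α - β) * μ))) := by
  simp_rw [exp_mul_hyperbolicPDF]
  have h := ((tendsto_sub_sqrt_add_sq_atTop hχ).comp (tendsto_atTop_add_const_right _ (-μ)
    tendsto_id)).const_mul α
  simpa [sub_eq_add_neg] using ((continuous_exp.tendsto _).comp h).const_mul (C * exp ((α - β) * μ))

lemma exp_mul_integral_Ioi_hyperbolicPDF_le (hαβ : |β| < α) (hχ : 0 ≤ χ) (hC : 0 ≤ C) (t : ℝ) :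
    exp ((α - β) * t) * ∫ x in Ioi t, hyperbolicPDF α β χ μ C x
      ≤ C * exp ((α - β) * μ) / (α - β) :=
  exp_mul_integral_Ioi_le (sub_pos.mpr ((le_abs_self β).trans_lt hαβ))
    (hyperbolicPDF_nonneg hC) (exp_mul_hyperbolicPDF_le ((abs_nonneg β).trans hαβ.le) hχ hC) t

lemma tendsto_exp_mul_integral_Ioi_hyperbolicPDF (hαβ : |β| < α) (hχ : 0 ≤ χ) (hC : 0 ≤ C) :
    Tendsto (fun t ↦ exp ((α - β) * t) * ∫ x in Ioi t, hyperbolicPDF α β χ μ C x) atTop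
      (𝓝 (C * exp ((α - β) * μ) / (α - β))) :=
  tendsto_exp_mul_integral_Ioi (sub_pos.mpr ((le_abs_self β).trans_lt hαβ))
    continuous_hyperbolicPDF.measurable (hyperbolicPDF_nonneg hC)
    (exp_mul_hyperbolicPDF_le ((abs_nonneg β).trans hαβ.le) hχ hC)
    (tendsto_exp_mul_hyperbolicPDF hχ)

end Hyperbolic

section Gaussian

open scoped NNReal

variable {v : ℝ≥0}

lemma integral_exp_neg_mul_gaussianReal (v : ℝ≥0) (t : ℝ) :
    ∫ z, exp (-t * z) ∂gaussianReal 0 v = exp (v * t ^ 2 / 2) := by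
  simpa [mgf] using congrFun (mgf_id_gaussianReal (μ := 0) (v := v)) (-t)

lemma gaussianPDFReal_mul_exp_neg_mul (hv : v ≠ 0) (t z : ℝ) :
    gaussianPDFReal 0 v z * exp (-t * z)
      = exp (v * t ^ 2 / 2) * gaussianPDFReal 0 v (z + v * t) := by
  have hv' : (v : ℝ) ≠ 0 := mod_cast hv
  rw [gaussianPDFReal, gaussianPDFReal, mul_left_comm, mul_assoc, ← exp_add, ← exp_add]
  congr 2
  field_simp
  ring

lemma integral_exp_neg_mul_abs_gaussianReal (hv : v ≠ 0) (t : ℝ) :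
    ∫ z, exp (-t * |z|) ∂gaussianReal 0 v
      = 2 * exp (v * t ^ 2 / 2) * (gaussianReal 0 v (Ioi (v * t))).toReal := by
  have heven : ∀ z, gaussianPDFReal 0 v z * exp (-t * |z|)
      = gaussianPDFReal 0 v |z| * exp (-t * |z|) := by
    simp [gaussianPDFReal]
  rw [integral_gaussianReal_eq_integral_smul hv]
  simp_rw [smul_eq_mul, heven]
  rw [integral_comp_abs (f := fun z ↦ gaussianPDFReal 0 v z * exp (-t * z))]
  simp_rw [gaussianPDFReal_mul_exp_neg_mul hv]
  rw [integral_const_mul, integral_Ioi_comp_add_right (gaussianPDFReal 0 v), zero_add,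
    gaussianReal_apply_eq_integral 0 hv, ENNReal.toReal_ofReal
      (integral_nonneg fun _ ↦ gaussianPDFReal_nonneg _ _ _)]
  ring

lemma stdNormalCDF_eq_gaussianReal_Iio (c : ℝ) :
    stdNormalCDF c = (gaussianReal 0 1 (Iio c)).toReal := by
  have := nullSingletonClass_gaussianReal (μ := 0) one_ne_zero
  rw [stdNormalCDF, measure_congr Iio_ae_eq_Iic]

lemma gaussianReal_Ioi_sqrt_mul_eq_stdNormalCDF (hv : v ≠ 0) (c : ℝ) :
    (gaussianReal 0 v (Ioi (√v * c))).toReal = stdNormalCDF (-c) := by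
  have hsqrt : 0 < √(v : ℝ) := sqrt_pos.mpr (NNReal.coe_pos.mpr (pos_of_ne_zero hv))
  have hmap : (gaussianReal 0 1).map (-√v * ·) = gaussianReal 0 v := by
    rw [gaussianReal_map_const_mul, mul_zero]
    congr 1
    ext
    simp
  rw [← hmap, Measure.map_apply (measurable_const_mul _) measurableSet_Ioi,
    stdNormalCDF_eq_gaussianReal_Iio]
  congr 2
  ext x
  simp only [mem_preimage, mem_Ioi, mem_Iio]
  constructor <;> intro h <;> nlinarith

lemma integral_exp_neg_mul_abs_div_integral_exp_neg_mul_gaussianReal (hv : v ≠ 0) (t : ℝ) :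
    (∫ z, exp (-t * |z|) ∂gaussianReal 0 v) / ∫ z, exp (-t * z) ∂gaussianReal 0 v
      = 2 * stdNormalCDF (-(t * √v)) := by
  rw [integral_exp_neg_mul_abs_gaussianReal hv, integral_exp_neg_mul_gaussianReal,
    mul_div_right_comm, mul_div_cancel_right₀ _ (exp_pos _).ne',
    show (v : ℝ) * t = √v * (t * √v) by rw [mul_left_comm, mul_self_sqrt v.coe_nonneg, mul_comm],
    gaussianReal_Ioi_sqrt_mul_eq_stdNormalCDF hv, mul_comm]

end Gaussian

section TailRatio

lemma measurable_measure_Ici (ν : Measure ℝ) : Measurable fun t ↦ ν (Ici t) :=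
  Antitone.measurable fun _ _ hab ↦ measure_mono (Ici_subset_Ici.mpr hab)

lemma IndepFun.toReal_measure_add_le_eq_integral {Ω : Type*} [MeasurableSpace Ω]
    {P : Measure Ω} [IsFiniteMeasure P] {X Z : Ω → ℝ} (hX : Measurable X) (hZ : Measurable Z)
    (hXZ : IndepFun X Z P) {h : ℝ → ℝ} (hh : Measurable h) (c : ℝ) :
    (P {ω | c + h (Z ω) ≤ X ω}).toReal = ∫ z, (P.map X (Ici (c + h z))).toReal ∂P.map Z := by
  have hS : MeasurableSet {p : ℝ × ℝ | c + h p.2 ≤ p.1} :=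
    measurableSet_le (by fun_prop) measurable_fst
  rw [show {ω | c + h (Z ω) ≤ X ω} = (fun ω ↦ (X ω, Z ω)) ⁻¹' {p | c + h p.2 ≤ p.1} from rfl,
    ← Measure.map_apply (hX.prodMk hZ) hS,
    (indepFun_iff_map_prod_eq_prod_map_map hX.aemeasurable hZ.aemeasurable).mp hXZ,
    Measure.prod_apply_symm hS]
  exact (integral_toReal ((measurable_measure_Ici _).comp (hh.const_add c)).aemeasurable
    (ae_of_all _ fun _ ↦ measure_lt_top _ _)).symm

variable {g : ℝ → ℝ} {l M L : ℝ}

lemma tendsto_exp_mul_integral_comp_add (hg : Measurable g) (hg0 : ∀ t, 0 ≤ g t)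
    (hM : ∀ t, exp (l * t) * g t ≤ M)
    (hlim : Tendsto (fun t ↦ exp (l * t) * g t) atTop (𝓝 L)) {ν : Measure ℝ} {h : ℝ → ℝ}
    (hh : Measurable h) (hint : Integrable (fun z ↦ exp (-l * h z)) ν) :
    Tendsto (fun s ↦ exp (l * s) * ∫ z, g (s + h z) ∂ν) atTop
      (𝓝 ((∫ z, exp (-l * h z) ∂ν) * L)) := by
  have hsplit : ∀ s z, exp (l * s) * g (s + h z)
      = exp (-l * h z) * (exp (l * (s + h z)) * g (s + h z)) := fun s z ↦ by
    rw [← mul_assoc, ← exp_add]; ring_nf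
  simp_rw [← integral_const_mul, hsplit, ← integral_mul_const]
  refine tendsto_integral_filter_of_dominated_convergence _
    (Eventually.of_forall fun s ↦ by fun_prop) (Eventually.of_forall fun s ↦ ?_)
    (hint.mul_const M)
    (ae_of_all _ fun z ↦ (hlim.comp (tendsto_atTop_add_const_right _ (h z) tendsto_id)).const_mul _)
  refine ae_of_all _ fun z ↦ ?_
  rw [norm_of_nonneg (by have := hg0 (s + h z); positivity)]
  exact mul_le_mul_of_nonneg_left (hM _) (exp_pos _).le

lemma tendsto_integral_comp_add_abs_div_integral_comp_add (hl : 0 ≤ l) (hg : Measurable g)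
    (hg0 : ∀ t, 0 ≤ g t) (hM : ∀ t, exp (l * t) * g t ≤ M)
    (hlim : Tendsto (fun t ↦ exp (l * t) * g t) atTop (𝓝 L)) (hL : L ≠ 0)
    {ν : Measure ℝ} [IsProbabilityMeasure ν] (hint : Integrable (fun z ↦ exp (-l * z)) ν) :
    Tendsto (fun s ↦ (∫ z, g (s + |z|) ∂ν) / ∫ z, g (s + z) ∂ν) atTop
      (𝓝 ((∫ z, exp (-l * |z|) ∂ν) / ∫ z, exp (-l * z) ∂ν)) := by
  have hint_abs : Integrable (fun z ↦ exp (-l * |z|)) ν :=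
    Integrable.of_bound (by fun_prop) 1 (ae_of_all _ fun z ↦ by
      rw [norm_of_nonneg (exp_pos _).le, exp_le_one_iff]
      nlinarith [abs_nonneg z])
  have hnum := tendsto_exp_mul_integral_comp_add hg hg0 hM hlim measurable_abs hint_abs
  have hden := tendsto_exp_mul_integral_comp_add hg hg0 hM hlim measurable_id hint
  have hlim := hnum.div hden (mul_ne_zero (integral_exp_pos hint).ne' hL)
  rw [mul_div_mul_right _ _ hL] at hlim
  exact hlim.congr fun s ↦ mul_div_mul_left _ _ (exp_pos _).ne'

end TailRatio

lemma le_add_div_and_le_sub_div_iff {a b s y : ℝ} (hs : 0 < s) :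
    y ≤ (a + b) / s ∧ y ≤ (a - b) / s ↔ y * s + |b| ≤ a := by
  rw [le_div_iff₀ hs, le_div_iff₀ hs, ← le_sub_iff_add_le', abs_le]
  constructor <;> rintro ⟨h1, h2⟩ <;> constructor <;> linarith

/-- Upper tail dependence of the Hyperbolic-Normal Principal Component Copula:
`lim_{y → +∞} ℙ(Y₁ ≥ y, Y₂ ≥ y) / ℙ(Y₂ ≥ y) = 2 Φ(-(α-β)σ)`. -/
theorem hyperbolic_normal_pcc_upper_tail_dependence
    {Ω : Type*} [MeasureSpace Ω] [IsProbabilityMeasure (ℙ : Measure Ω)]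
    (P₁ P₂ : Ω → ℝ) (hP₁ : Measurable P₁) (hP₂ : Measurable P₂)
    (hindep : IndepFun P₁ P₂ ℙ)
    (α β χ μ C : ℝ) (hαβ : |β| < α) (hχ : 0 < χ) (hC : 0 < C)
    (f₁ : ℝ → ℝ)
    (hf₁ : ∀ x, f₁ x = C * Real.exp (-(α * Real.sqrt (χ + (x - μ) ^ 2)) + β * (x - μ)))
    (hP₁law : Measure.map P₁ ℙ = volume.withDensity fun x => ENNReal.ofReal (f₁ x))
    (σ : ℝ) (hσ : 0 < σ)
    (hP₂law : Measure.map P₂ ℙ = gaussianReal 0 ⟨σ ^ 2, sq_nonneg σ⟩)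
    (Y₁ Y₂ : Ω → ℝ)
    (hY₁ : ∀ ω, Y₁ ω = (P₁ ω + P₂ ω) / Real.sqrt 2)
    (hY₂ : ∀ ω, Y₂ ω = (P₁ ω - P₂ ω) / Real.sqrt 2) :
    Tendsto
      (fun y : ℝ =>
        (ℙ {ω | y ≤ Y₁ ω ∧ y ≤ Y₂ ω}).toReal / (ℙ {ω | y ≤ Y₂ ω}).toReal)
      atTop (nhds (2 * stdNormalCDF (-((α - β) * σ)))) := by
  obtain rfl : f₁ = hyperbolicPDF α β χ μ C := funext hf₁
  -- as an `ℝ≥0`-typed variable the variance is matched by the lemmas about `gaussianReal 0 v`,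
  -- which do not unify with the anonymous constructor `⟨σ ^ 2, _⟩ : {r // 0 ≤ r}`
  set v : NNReal := ⟨σ ^ 2, sq_nonneg σ⟩
  have hv : v ≠ 0 := (NNReal.coe_pos.mp (show (0 : ℝ) < v from pow_pos hσ 2)).ne'
  have hl : 0 < α - β := by linarith [le_abs_self β]
  have hG : ∀ t, (Measure.map P₁ ℙ (Ici t)).toReal = ∫ x in Ioi t, hyperbolicPDF α β χ μ C x := by
    simpa only [hP₁law] using toReal_withDensity_Ici_eq_integral_Ioi
      continuous_hyperbolicPDF.measurable (hyperbolicPDF_nonneg hC.le)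
  have hsqrt2 : 0 < √2 := sqrt_pos.mpr two_pos
  have : IsProbabilityMeasure (Measure.map P₂ ℙ) := Measure.isProbabilityMeasure_map hP₂.aemeasurable
  have hratio := (tendsto_integral_comp_add_abs_div_integral_comp_add hl.le
    (measurable_measure_Ici _).ennreal_toReal (fun _ ↦ ENNReal.toReal_nonneg)
    (fun t ↦ (hG t).symm ▸ exp_mul_integral_Ioi_hyperbolicPDF_le hαβ hχ.le hC.le t)
    (by simpa only [hG] using tendsto_exp_mul_integral_Ioi_hyperbolicPDF hαβ hχ.le hC.le)
    (by positivity) (hP₂law ▸ integrable_exp_mul_gaussianReal _)).comp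
    (tendsto_id.atTop_mul_const hsqrt2)
  rw [hP₂law, integral_exp_neg_mul_abs_div_integral_exp_neg_mul_gaussianReal hv,
    show √(v : ℝ) = σ from sqrt_sq hσ.le] at hratio
  refine hratio.congr fun y ↦ ?_
  simp only [Function.comp_apply, id, hY₁, hY₂, le_add_div_and_le_sub_div_iff hsqrt2]
  simp only [le_div_iff₀ hsqrt2, le_sub_iff_add_le]
  rw [IndepFun.toReal_measure_add_le_eq_integral hP₁ hP₂ hindep measurable_abs,
    IndepFun.toReal_measure_add_le_eq_integral hP₁ hP₂ hindep (h := fun z ↦ z) measurable_id, hP₂law]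
end

section
/- (Gil-Pelaez inversion) Let Y be a real-valued random variable whose distribution has no atoms, with cumulative distribution function F and characteristic function φ(t) = E[exp(i·t·Y)]. Then for every y ∈ ℝ, F(y) = 1/2 − (1/π)·lim_{ε→0⁺, T→∞} ∫_ε^T Im(exp(−i·t·y)·φ(t))/t dt, where the improper integral is understood as the limit of the integrals over [ε, T]. -/
/-!
The integrand is `E[sin((Y - y) t)] / t`, so for `0 < ε ≤ T` Fubini turns `∫_ε^T` of it into
`E[Si((Y - y) T) - Si((Y - y) ε)]`, where `Si x = ∫_0^x sin t / t dt`. The sine integral is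
bounded and tends to `±π/2` at `±∞` (Dirichlet's integral, computed by writing
`1 / t = ∫_0^∞ e^{-st} ds` and exchanging the integrals), so by dominated convergence the limit is
`(π/2) E[sign(Y - y)] = (π/2) (P(Y > y) - P(Y < y))`. Without an atom at `y` this is
`(π/2) (1 - 2 F(y))`.
-/

open MeasureTheory ProbabilityTheory Filter Complex Set Topology
open scoped Real

noncomputable def sineIntegral (x : ℝ) : ℝ := ∫ t in 0..x, Real.sinc t

@[simp]
lemma sineIntegral_zero : sineIntegral 0 = 0 := intervalIntegral.integral_same

lemma continuous_sineIntegral : Continuous sineIntegral :=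
  continuous_iff_continuousAt.2 fun x =>
    (Real.continuous_sinc.integral_hasStrictDerivAt 0 x).hasDerivAt.continuousAt

lemma sineIntegral_neg (x : ℝ) : sineIntegral (-x) = -sineIntegral x := by
  have h := intervalIntegral.integral_comp_neg (a := 0) (b := x) Real.sinc
  simp only [Real.sinc_neg, neg_zero] at h
  rw [sineIntegral, sineIntegral, h, intervalIntegral.integral_symm]

lemma integral_sin_mul_div (a : ℝ) {ε T : ℝ} (hε : 0 < ε) (hT : 0 < T) :
    ∫ t in ε..T, Real.sin (a * t) / t = sineIntegral (a * T) - sineIntegral (a * ε) := by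
  have h : ∀ t ∈ uIcc ε T, Real.sin (a * t) / t = a * Real.sinc (a * t) := by
    intro t ht
    have ht0 : t ≠ 0 := ((lt_min hε hT).trans_le ht.1).ne'
    rcases eq_or_ne a 0 with rfl | ha
    · simp
    rw [Real.sinc_of_ne_zero (mul_ne_zero ha ht0)]
    field_simp
  have hint (u v : ℝ) : IntervalIntegrable Real.sinc volume u v :=
    Real.continuous_sinc.intervalIntegrable u v
  rw [intervalIntegral.integral_congr h, intervalIntegral.integral_const_mul,
    intervalIntegral.mul_integral_comp_mul_left,
    sineIntegral, sineIntegral, intervalIntegral.integral_interval_sub_left (hint _ _) (hint _ _)]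

lemma integral_exp_neg_mul_Ioi {t : ℝ} (ht : 0 < t) : ∫ s in Ioi 0, Real.exp (-(s * t)) = t⁻¹ := by
  simpa only [zero_mul, integral_exp_neg_Ioi_zero, smul_eq_mul, mul_one] using
    integral_comp_mul_right_Ioi (fun u => Real.exp (-u)) 0 ht

lemma integral_exp_neg_mul_mul_sin (s A : ℝ) :
    ∫ t in 0..A, Real.exp (-(s * t)) * Real.sin t =
      (1 - Real.exp (-(s * A)) * (Real.cos A + s * Real.sin A)) / (1 + s ^ 2) := by
  have hs : 1 + s ^ 2 ≠ 0 := by positivity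
  have hderiv (t : ℝ) : HasDerivAt
      (fun t => -(Real.exp (-(s * t)) * (Real.cos t + s * Real.sin t)) / (1 + s ^ 2))
      (Real.exp (-(s * t)) * Real.sin t) t := by
    refine ((((hasDerivAt_id t).const_mul s).neg.exp.mul ((Real.hasDerivAt_cos t).add
      ((Real.hasDerivAt_sin t).const_mul s))).neg.div_const (1 + s ^ 2)).congr_deriv ?_
    simp only [id, Pi.add_apply, Pi.neg_apply]
    field_simp
    ring
  rw [intervalIntegral.integral_eq_sub_of_hasDerivAt (fun t _ => hderiv t)
    ((by fun_prop : Continuous fun t => Real.exp (-(s * t)) * Real.sin t).intervalIntegrable _ _)]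
  field_simp
  simp only [mul_zero, neg_zero, Real.exp_zero, Real.cos_zero, Real.sin_zero, one_mul]
  ring

lemma sineIntegral_eq_integral_Ioi {A : ℝ} (hA : 0 ≤ A) :
    sineIntegral A = ∫ s in Ioi 0,
      (1 - Real.exp (-(s * A)) * (Real.cos A + s * Real.sin A)) / (1 + s ^ 2) := by
  have hpos : ∀ᵐ t ∂volume.restrict (uIoc 0 A), 0 < t := by
    rw [uIoc_of_le hA]
    exact (ae_restrict_mem measurableSet_Ioc).mono fun t ht => ht.1
  have hint : Integrable (Function.uncurry fun t s => Real.exp (-(s * t)) * Real.sin t)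
      ((volume.restrict (uIoc 0 A)).prod (volume.restrict (Ioi 0))) := by
    refine (integrable_prod_iff (Continuous.aestronglyMeasurable (by fun_prop))).2 ⟨?_, ?_⟩
    · filter_upwards [hpos] with t ht
      have : IntegrableOn (fun s => Real.exp (-(s * t))) (Ioi 0) := by
        simpa [mul_comm] using exp_neg_integrableOn_Ioi 0 ht
      exact this.mul_const (Real.sin t)
    · have hsinc : IntegrableOn (fun t => |Real.sinc t|) (uIoc 0 A) := by
        rw [uIoc_of_le hA]
        exact (Real.continuous_sinc.abs.integrableOn_Icc).mono_set Ioc_subset_Icc_self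
      refine hsinc.congr ?_
      filter_upwards [hpos] with t ht
      simp only [Function.uncurry_apply_pair, norm_mul, Real.norm_eq_abs, Real.abs_exp,
        integral_mul_const, integral_exp_neg_mul_Ioi ht, Real.sinc_of_ne_zero ht.ne', div_eq_inv_mul,
        abs_mul, abs_inv, abs_of_pos ht]
  calc sineIntegral A = ∫ t in 0..A, ∫ s in Ioi 0, Real.exp (-(s * t)) * Real.sin t := by
        refine intervalIntegral.integral_congr_ae ?_
        filter_upwards [(ae_restrict_iff' measurableSet_uIoc).1 hpos] with t ht hmem
        rw [integral_mul_const, integral_exp_neg_mul_Ioi (ht hmem),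
          Real.sinc_of_ne_zero (ht hmem).ne', inv_mul_eq_div]
    _ = ∫ s in Ioi 0, ∫ t in 0..A, Real.exp (-(s * t)) * Real.sin t :=
        intervalIntegral_integral_swap hint
    _ = _ := by simp only [integral_exp_neg_mul_mul_sin]

lemma tendsto_sineIntegral_atTop : Tendsto sineIntegral atTop (𝓝 (π / 2)) := by
  set g : ℝ → ℝ → ℝ := fun A s => Real.exp (-(s * A)) * (Real.cos A + s * Real.sin A)
  have hg (A : ℝ) {s : ℝ} (hs : 0 ≤ s) : |g A s| ≤ (1 + s) * Real.exp (-(s * A)) := by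
    have htrig : |Real.cos A + s * Real.sin A| ≤ 1 + s := calc
      _ ≤ |Real.cos A| + s * |Real.sin A| := by
          simpa only [abs_mul, abs_of_nonneg hs] using abs_add_le (Real.cos A) (s * Real.sin A)
      _ ≤ 1 + s * 1 := by gcongr; exacts [Real.abs_cos_le_one A, Real.abs_sin_le_one A]
      _ = 1 + s := by ring
    rw [abs_mul, Real.abs_exp, mul_comm]
    gcongr
  have hg_le {A s : ℝ} (hA : 1 ≤ A) (hs : 0 ≤ s) : |g A s| ≤ 1 := calc
    _ ≤ (1 + s) * Real.exp (-(s * A)) := hg A hs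
    _ ≤ Real.exp s * Real.exp (-s) := by
        gcongr
        · linarith [Real.add_one_le_exp s]
        · nlinarith
    _ = 1 := by rw [← Real.exp_add, add_neg_cancel, Real.exp_zero]
  have hg_lim {s : ℝ} (hs : 0 < s) : Tendsto (fun A => g A s) atTop (𝓝 0) := by
    refine squeeze_zero_norm (fun A => hg A hs.le) ?_
    simpa using (Real.tendsto_exp_atBot.comp
      (tendsto_neg_atTop_atBot.comp (tendsto_id.const_mul_atTop hs))).const_mul (1 + s)
  have hdct := tendsto_integral_filter_of_dominated_convergence (μ := volume.restrict (Ioi 0))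
    (l := atTop) (F := fun A s => (1 - g A s) / (1 + s ^ 2)) (f := fun s => (1 + s ^ 2)⁻¹)
    (fun s => 2 * (1 + s ^ 2)⁻¹) (Eventually.of_forall fun A =>
      (Continuous.div (by fun_prop) (by fun_prop) fun s => by positivity).aestronglyMeasurable)
    ?_ (integrable_inv_one_add_sq.integrableOn.const_mul 2) ?_
  · rw [integral_Ioi_inv_one_add_sq, Real.arctan_zero, sub_zero] at hdct
    refine hdct.congr' ?_
    filter_upwards [eventually_ge_atTop 0] with A hA using (sineIntegral_eq_integral_Ioi hA).symm
  · filter_upwards [eventually_ge_atTop 1] with A hA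
    filter_upwards [ae_restrict_mem measurableSet_Ioi] with s hs
    rw [Real.norm_eq_abs, abs_div, abs_of_pos (by positivity : (0 : ℝ) < 1 + s ^ 2), div_eq_mul_inv]
    gcongr
    exact (abs_sub _ _).trans (by rw [abs_one]; linarith [hg_le hA (le_of_lt hs)])
  · filter_upwards [ae_restrict_mem measurableSet_Ioi] with s hs
    simpa using ((tendsto_const_nhds (x := (1 : ℝ))).sub (hg_lim hs)).div_const (1 + s ^ 2)

lemma tendsto_sineIntegral_atBot : Tendsto sineIntegral atBot (𝓝 (-(π / 2))) := by
  have h := tendsto_sineIntegral_atTop.comp tendsto_neg_atBot_atTop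
  refine h.neg.congr fun x => ?_
  simp [sineIntegral_neg]

lemma exists_abs_sineIntegral_le : ∃ C, ∀ x, |sineIntegral x| ≤ C := by
  have h := continuous_sineIntegral.isBounded_range_iff_isBigO_atTop_atBot.2
    ⟨tendsto_sineIntegral_atTop.isBigO_one ℝ, tendsto_sineIntegral_atBot.isBigO_one ℝ⟩
  obtain ⟨C, hC⟩ := isBounded_iff_forall_norm_le.1 h
  exact ⟨C, fun x => hC _ (mem_range_self x)⟩

lemma tendsto_sineIntegral_mul_atTop (a : ℝ) :
    Tendsto (fun T => sineIntegral (a * T)) atTop (𝓝 (π / 2 * Real.sign a)) := by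
  rcases lt_trichotomy a 0 with ha | rfl | ha
  · rw [Real.sign_of_neg ha, mul_neg_one]
    exact tendsto_sineIntegral_atBot.comp (tendsto_id.const_mul_atTop_of_neg ha)
  · simp
  · rw [Real.sign_of_pos ha, mul_one]
    exact tendsto_sineIntegral_atTop.comp (tendsto_id.const_mul_atTop ha)

lemma tendsto_sineIntegral_mul_sub (a : ℝ) :
    Tendsto (fun p : ℝ × ℝ => sineIntegral (a * p.2) - sineIntegral (a * p.1))
      (𝓝[>] 0 ×ˢ atTop) (𝓝 (π / 2 * Real.sign a)) := by
  have hlow : Tendsto (fun p : ℝ × ℝ => sineIntegral (a * p.1)) (𝓝[>] 0 ×ˢ atTop) (𝓝 0) := by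
    have h := ((continuous_sineIntegral.comp (continuous_const_mul a)).tendsto 0).comp
      ((tendsto_fst (f := 𝓝[>] (0 : ℝ)) (g := (atTop : Filter ℝ))).mono_right nhdsWithin_le_nhds)
    rwa [Function.comp_apply, mul_zero, sineIntegral_zero] at h
  simpa using ((tendsto_sineIntegral_mul_atTop a).comp tendsto_snd).sub hlow

section CharFun

variable (μ : Measure ℝ) [IsFiniteMeasure μ]

lemma im_exp_mul_charFun (y t : ℝ) :
    (cexp (-(I * t * y)) * charFun μ t).im = ∫ x, Real.sin ((x - y) * t) ∂μ := by
  have h (x : ℝ) : cexp (-(I * t * y)) * cexp (t * x * I) = cexp (((x - y) * t : ℝ) * I) := by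
    rw [← Complex.exp_add]
    push_cast
    ring_nf
  have hint : Integrable (fun x : ℝ => cexp (((x - y) * t : ℝ) * I)) μ :=
    Integrable.of_bound (by fun_prop) 1 (ae_of_all _ fun x => (norm_exp_ofReal_mul_I _).le)
  rw [charFun_apply_real, ← integral_const_mul]
  simp_rw [h, ← exp_ofReal_mul_I_im]
  exact (integral_im hint).symm

lemma integral_integral_sin_mul_div_swap (y : ℝ) {ε T : ℝ} (hε : 0 < ε) (hεT : ε ≤ T) :
    ∫ t in ε..T, (∫ x, Real.sin ((x - y) * t) ∂μ) / t =
      ∫ x, (∫ t in ε..T, Real.sin ((x - y) * t) / t) ∂μ := by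
  simp_rw [← integral_div]
  have hge : ∀ᵐ t ∂volume.restrict (uIoc ε T), ε ≤ t := by
    rw [uIoc_of_le hεT]
    exact (ae_restrict_mem measurableSet_Ioc).mono fun t ht => ht.1.le
  have : IsFiniteMeasure (volume.restrict (uIoc ε T)) := by rw [uIoc_of_le hεT]; infer_instance
  refine intervalIntegral_integral_swap (Integrable.of_bound ?_ ε⁻¹ ?_)
  · exact (by fun_prop : Measurable fun q : ℝ × ℝ => Real.sin ((q.2 - y) * q.1) / q.1).aestronglyMeasurable
  · filter_upwards [Measure.quasiMeasurePreserving_fst.ae hge] with q hq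
    change ‖Real.sin ((q.2 - y) * q.1) / q.1‖ ≤ ε⁻¹
    rw [norm_div, Real.norm_eq_abs, Real.norm_eq_abs, abs_of_pos (hε.trans_le hq)]
    calc _ ≤ 1 / q.1 := by gcongr; exacts [(hε.trans_le hq).le, Real.abs_sin_le_one _]
      _ ≤ ε⁻¹ := by rw [one_div]; exact inv_anti₀ hε hq

lemma integral_Ioc_im_exp_mul_charFun_div (y : ℝ) {ε T : ℝ} (hε : 0 < ε) (hεT : ε ≤ T) :
    ∫ t in Ioc ε T, (cexp (-(I * t * y)) * charFun μ t).im / t =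
      ∫ x, (sineIntegral ((x - y) * T) - sineIntegral ((x - y) * ε)) ∂μ := by
  simp_rw [im_exp_mul_charFun, ← intervalIntegral.integral_of_le hεT,
    integral_integral_sin_mul_div_swap μ y hε hεT, integral_sin_mul_div _ hε (hε.trans_le hεT)]

lemma integral_sign_sub (y : ℝ) :
    ∫ x, Real.sign (x - y) ∂μ = μ.real (Ioi y) - μ.real (Iio y) := by
  have h : (fun x => Real.sign (x - y)) =
      fun x => (Ioi y).indicator (1 : ℝ → ℝ) x - (Iio y).indicator 1 x := by
    ext x
    rcases lt_trichotomy x y with h | rfl | h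
    · simp [h, h.not_gt, Real.sign_of_neg (sub_neg.2 h)]
    · simp
    · simp [h, h.not_gt, Real.sign_of_pos (sub_pos.2 h)]
  rw [h, integral_sub ((integrable_const 1).indicator measurableSet_Ioi)
    ((integrable_const 1).indicator measurableSet_Iio), integral_indicator_one measurableSet_Ioi,
    integral_indicator_one measurableSet_Iio]

theorem tendsto_integral_im_exp_mul_charFun_div (y : ℝ) :
    Tendsto (fun p : ℝ × ℝ => ∫ t in Ioc p.1 p.2, (cexp (-(I * t * y)) * charFun μ t).im / t)
      (𝓝[>] 0 ×ˢ atTop) (𝓝 (π / 2 * (μ.real (Ioi y) - μ.real (Iio y)))) := by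
  obtain ⟨C, hC⟩ := exists_abs_sineIntegral_le
  set G : ℝ × ℝ → ℝ → ℝ := fun p x => sineIntegral ((x - y) * p.2) - sineIntegral ((x - y) * p.1)
  have hG_meas (p : ℝ × ℝ) : AEStronglyMeasurable (G p) μ :=
    (continuous_sineIntegral.comp ((continuous_sub_right y).mul continuous_const)).sub
      (continuous_sineIntegral.comp ((continuous_sub_right y).mul continuous_const))
      |>.aestronglyMeasurable
  have hG_le (p : ℝ × ℝ) (x : ℝ) : ‖G p x‖ ≤ 2 * C :=
    (norm_sub_le _ _).trans <| by
      rw [Real.norm_eq_abs, Real.norm_eq_abs]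
      linarith [hC ((x - y) * p.2), hC ((x - y) * p.1)]
  have hdct := tendsto_integral_filter_of_dominated_convergence (fun _ => 2 * C)
    (Eventually.of_forall hG_meas) (Eventually.of_forall fun p => ae_of_all μ (hG_le p))
    (integrable_const _) (ae_of_all _ fun x => tendsto_sineIntegral_mul_sub (x - y))
  rw [integral_const_mul, integral_sign_sub] at hdct
  refine hdct.congr' ?_
  filter_upwards [prod_mem_prod (Ioo_mem_nhdsGT one_pos) (Ici_mem_atTop 1)] with p hp
  exact (integral_Ioc_im_exp_mul_charFun_div μ y hp.1.1 (hp.1.2.le.trans hp.2)).symm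

end CharFun

/-- Gil-Pelaez inversion: for a real random variable `Y` whose law has no atoms, with CDF `F`
and characteristic function `φ`, for every `y`,
`F(y) = 1/2 - (1/π) lim_{ε→0⁺, T→∞} ∫_ε^T Im(e^{-ity} φ(t))/t dt`. -/
theorem gil_pelaez_inversion
    {Ω : Type*} [MeasureSpace Ω] [IsProbabilityMeasure (ℙ : Measure Ω)]
    (Y : Ω → ℝ) (hY : Measurable Y)
    (hNoAtoms : ∀ y : ℝ, Measure.map Y ℙ {y} = 0)
    (F : ℝ → ℝ) (hF : ∀ y, F y = (ℙ {ω | Y ω ≤ y}).toReal)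
    (φ : ℝ → ℂ) (hφ : ∀ t : ℝ, φ t = ∫ ω, Complex.exp (Complex.I * t * Y ω) ∂ℙ) :
    ∀ y : ℝ, ∃ L : ℝ,
      Tendsto
        (fun p : ℝ × ℝ =>
          ∫ t in Set.Ioc p.1 p.2, (Complex.exp (-(Complex.I * t * y)) * φ t).im / t)
        ((nhdsWithin (0 : ℝ) (Set.Ioi 0)) ×ˢ atTop) (nhds L) ∧
      F y = 1 / 2 - (1 / Real.pi) * L := by
  intro y
  set μ : Measure ℝ := Measure.map Y ℙ
  have : IsProbabilityMeasure μ := Measure.isProbabilityMeasure_map hY.aemeasurable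
  have hφμ : φ = charFun μ := funext fun t => by
    rw [hφ, charFun_apply_real, integral_map hY.aemeasurable (by fun_prop)]
    simp_rw [mul_comm I, mul_right_comm]
  have hIic : μ.real (Iic y) = F y := by
    rw [hF, measureReal_def, Measure.map_apply hY measurableSet_Iic]
    rfl
  have hIio : μ.real (Iio y) = F y := (measureReal_congr (Iio_ae_eq_Iic' (hNoAtoms y))).trans hIic
  have hIoi : μ.real (Ioi y) = 1 - F y := by
    rw [← compl_Iic, probReal_compl_eq_one_sub measurableSet_Iic, hIic]
  refine ⟨_, hφμ ▸ tendsto_integral_im_exp_mul_charFun_div μ y, ?_⟩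
  rw [hIio, hIoi]
  field_simp
  ring
end
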